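/- arXiv:1607.03390 — 6 statements merged into one kernel-verified Lean document; each statement's English description precedes it below -/
import Mathlib

section
/- Let X ∈ ℝ^{n×p} have full column rank p < n, let H be a symmetric positive definite n×n matrix, and let L₂ ∈ ℝ^{n×(n−p)} satisfy L₂ᵀX = 0 with rank(L₂) = n − p. Define P = H⁻¹ − H⁻¹X(XᵀH⁻¹X)⁻¹XᵀH⁻¹. Then P = L₂(L₂ᵀHL₂)⁻¹L₂ᵀ. -/
/-!
Put `P = H⁻¹ - H⁻¹X(XᵀH⁻¹X)⁻¹XᵀH⁻¹` and `Q = L₂(L₂ᵀHL₂)⁻¹L₂ᵀ`. Both kill `X` and both send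
`HL₂` to `L₂`. The columns of `X` and `HL₂` form a basis of `ℝⁿ`: if `Xa + HL₂b = 0`, then
multiplying by `L₂ᵀ` gives `L₂ᵀHL₂ b = 0`, so `b = 0` and then `a = 0`. Hence `P = Q`.
-/

open Matrix

namespace Matrix

variable {K : Type*} [Field K] {m n k l : Type*} [Fintype k]

theorem mulVec_injective_of_rank_eq_card (A : Matrix m k K) (hA : A.rank = Fintype.card k) :
    Function.Injective A.mulVec := by
  have h := A.mulVecLin.finrank_range_add_finrank_ker
  rw [Module.finrank_fintype_fun_eq_card, ← rank, hA, Nat.add_eq_left,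
    Submodule.finrank_eq_zero] at h
  exact LinearMap.ker_eq_bot.mp h

theorem eq_of_mul_eq_mul_of_mulVec_injective [Fintype m] [DecidableEq m] {A B : Matrix n m K}
    {W : Matrix m k K} (hcard : Fintype.card k = Fintype.card m) (hW : Function.Injective W.mulVec)
    (h : A * W = B * W) : A = B := by
  have hsurj : Function.Surjective W.mulVec :=
    (LinearMap.injective_iff_surjective_of_finrank_eq_finrank (f := W.mulVecLin)
      (by simp [hcard])).mp hW
  obtain ⟨V, hWV⟩ := mulVec_surjective_iff_exists_right_inverse.mp hsurj
  calc A = A * W * V := by rw [Matrix.mul_assoc, hWV, Matrix.mul_one]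
    _ = B * W * V := by rw [h]
    _ = B := by rw [Matrix.mul_assoc, hWV, Matrix.mul_one]

theorem mulVec_fromCols_mul_injective [Fintype m] [Fintype l] [DecidableEq l]
    {X : Matrix m k K} {H : Matrix m m K} {L : Matrix m l K}
    (hX : Function.Injective X.mulVec) (hLHL : (Lᵀ * H * L).det ≠ 0) (hLX : Lᵀ * X = 0) :
    Function.Injective (fromCols X (H * L)).mulVec := by
  refine (injective_iff_map_eq_zero (fromCols X (H * L)).mulVecLin).mpr fun v hv => ?_
  rw [mulVecLin_apply, fromCols_mulVec] at hv
  have hr : v ∘ Sum.inr = 0 := by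
    have h := congrArg (Lᵀ *ᵥ ·) hv
    simp only [mulVec_add, mulVec_mulVec, hLX, zero_mulVec, zero_add, mulVec_zero,
      ← Matrix.mul_assoc] at h
    exact mulVec_injective_of_det_ne_zero hLHL (h.trans (mulVec_zero _).symm)
  have hl : v ∘ Sum.inl = 0 := by
    rw [hr, mulVec_zero, add_zero] at hv
    exact hX (hv.trans (mulVec_zero _).symm)
  ext (i | i)
  · exact congrFun hl i
  · exact congrFun hr i

end Matrix

theorem stmt_2 (n p : ℕ) (hpn : p < n) (X : Matrix (Fin n) (Fin p) ℝ)
    (hX : X.rank = p) (H : Matrix (Fin n) (Fin n) ℝ) (hH : H.PosDef)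
    (L₂ : Matrix (Fin n) (Fin (n - p)) ℝ) (hL₂X : L₂ᵀ * X = 0)
    (hL₂ : L₂.rank = n - p) :
    H⁻¹ - H⁻¹ * X * (Xᵀ * H⁻¹ * X)⁻¹ * Xᵀ * H⁻¹ = L₂ * (L₂ᵀ * H * L₂)⁻¹ * L₂ᵀ := by
  have hXinj := mulVec_injective_of_rank_eq_card X (by simpa using hX)
  have hL₂inj := mulVec_injective_of_rank_eq_card L₂ (by simpa using hL₂)
  have hXHX : IsUnit (Xᵀ * H⁻¹ * X).det := by
    simpa using (isUnit_iff_isUnit_det _).mp (hH.inv.conjTranspose_mul_mul_same hXinj).isUnit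
  have hLHL : IsUnit (L₂ᵀ * H * L₂).det := by
    simpa using (isUnit_iff_isUnit_det _).mp (hH.conjTranspose_mul_mul_same hL₂inj).isUnit
  have hXL₂ : Xᵀ * L₂ = 0 := by simpa using congrArg transpose hL₂X
  refine eq_of_mul_eq_mul_of_mulVec_injective (W := fromCols X (H * L₂)) (by simp; omega)
    (mulVec_fromCols_mul_injective hXinj hLHL.ne_zero hL₂X) ?_
  rw [mul_fromCols, mul_fromCols]
  congr 1
  · simp only [Matrix.sub_mul, Matrix.mul_assoc, hL₂X, Matrix.mul_zero]
    rw [← Matrix.mul_assoc Xᵀ, nonsing_inv_mul _ hXHX, Matrix.mul_one, sub_self]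
  · simp only [Matrix.sub_mul, Matrix.mul_assoc,
      nonsing_inv_mul_cancel_left _ _ ((isUnit_iff_isUnit_det H).mp hH.isUnit), hXL₂,
      Matrix.mul_zero, sub_zero]
    rw [← Matrix.mul_assoc L₂ᵀ, nonsing_inv_mul _ hLHL, Matrix.mul_one]
end

section
/- Let X ∈ ℝ^{n×p} have full column rank p < n, H be symmetric positive definite, and L = [L₁, L₂] satisfy L₁ᵀX = I_p and L₂ᵀX = 0 with L nonsingular. Then (XᵀH⁻¹X)⁻¹ = L₁ᵀHL₁ − L₁ᵀHL₂(L₂ᵀHL₂)⁻¹L₂ᵀHL₁. -/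
/-!
Write `L = [L₁ L₂]` and `M = [M₁; M₂]` for its inverse. Since `Xᵀ L = [1 0]`, the first block row of
`M = L⁻¹` is `M₁ = Xᵀ`, so `L₁ Xᵀ + L₂ M₂ = 1`. Put `K = L₂ᵀ H L₂`, positive definite because `L₂` has
the left inverse `M₂`, and `G = H L₁ - H L₂ K⁻¹ L₂ᵀ H L₁`. Then `L₂ᵀ G = 0`, so the decomposition of the
identity gives `X L₁ᵀ G = G`; the right-hand side is `L₁ᵀ G`, and
`Xᵀ H⁻¹ X (L₁ᵀ G) = Xᵀ H⁻¹ G = Xᵀ L₁ - Xᵀ L₂ K⁻¹ L₂ᵀ H L₁ = 1`.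
-/

open Matrix

namespace Matrix

variable {R m n n₁ n₂ p q : Type*}

lemma mulVec_injective_of_mul_eq_one [Semiring R] [Fintype m] [Fintype n] [DecidableEq n]
    {A : Matrix m n R} {B : Matrix n m R} (h : B * A = 1) : Function.Injective A.mulVec :=
  fun v w hvw => by simpa [mulVec_mulVec, h] using congrArg (B *ᵥ ·) hvw

section Partitioned

variable [Semiring R] {A₁ : Matrix m n₁ R} {A₂ : Matrix m n₂ R} {B : Matrix (n₁ ⊕ n₂) m R}

lemma toRows₂_mul_eq_one_of_mul_fromCols_eq_one [Fintype m] [DecidableEq n₁] [DecidableEq n₂]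
    (h : B * fromCols A₁ A₂ = 1) : B.toRows₂ * A₂ = 1 := by
  rw [← fromRows_toRows B, fromRows_mul_fromCols, ← fromBlocks_one, fromBlocks_inj] at h
  exact h.2.2.2

lemma toRows₁_eq_of_fromCols_mul_eq_one [Fintype m] [Fintype n₁] [Fintype n₂]
    [DecidableEq m] [DecidableEq n₁] {Y : Matrix n₁ m R}
    (h : fromCols A₁ A₂ * B = 1) (h₁ : Y * A₁ = 1) (h₂ : Y * A₂ = 0) : B.toRows₁ = Y :=
  calc B.toRows₁
        = fromCols (1 : Matrix n₁ n₁ R) (0 : Matrix n₁ n₂ R) * fromRows B.toRows₁ B.toRows₂ := by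
        rw [fromCols_mul_fromRows, Matrix.one_mul, Matrix.zero_mul, add_zero]
    _ = Y * fromCols A₁ A₂ * B := by rw [fromRows_toRows, mul_fromCols, h₁, h₂]
    _ = Y := by rw [Matrix.mul_assoc, h, Matrix.mul_one]

lemma mul_add_mul_toRows₂_eq_one [Fintype m] [Fintype n₁] [Fintype n₂]
    [DecidableEq m] [DecidableEq n₁] {Y : Matrix n₁ m R}
    (h : fromCols A₁ A₂ * B = 1) (h₁ : Y * A₁ = 1) (h₂ : Y * A₂ = 0) :
    A₁ * Y + A₂ * B.toRows₂ = 1 := by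
  rw [← toRows₁_eq_of_fromCols_mul_eq_one h h₁ h₂, ← fromCols_mul_fromRows, fromRows_toRows, h]

end Partitioned

theorem inv_transpose_mul_inv_mul_eq [CommRing R] [Fintype n] [Fintype p] [Fintype q]
    [DecidableEq n] [DecidableEq p] [DecidableEq q]
    {H : Matrix n n R} {X L₁ : Matrix n p R} {L₂ : Matrix n q R} {N : Matrix q n R}
    (hH : IsUnit H.det) (hK : IsUnit (L₂ᵀ * H * L₂).det)
    (hXL₁ : Xᵀ * L₁ = 1) (hXL₂ : Xᵀ * L₂ = 0) (hL : L₁ * Xᵀ + L₂ * N = 1) :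
    (Xᵀ * H⁻¹ * X)⁻¹ =
      L₁ᵀ * H * L₁ - L₁ᵀ * H * L₂ * (L₂ᵀ * H * L₂)⁻¹ * L₂ᵀ * H * L₁ := by
  set K := L₂ᵀ * H * L₂ with hK_def
  set G := H * L₁ - H * L₂ * K⁻¹ * L₂ᵀ * H * L₁ with hG_def
  have hRHS : L₁ᵀ * H * L₁ - L₁ᵀ * H * L₂ * K⁻¹ * L₂ᵀ * H * L₁ = L₁ᵀ * G := by
    simp only [hG_def, Matrix.mul_sub, Matrix.mul_assoc]
  have hL₂G : L₂ᵀ * G = 0 := by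
    have : L₂ᵀ * (H * L₂ * K⁻¹ * L₂ᵀ * H * L₁) = K * K⁻¹ * (L₂ᵀ * H * L₁) := by
      simp only [hK_def, Matrix.mul_assoc]
    rw [hG_def, Matrix.mul_sub, this, mul_nonsing_inv K hK, Matrix.one_mul, Matrix.mul_assoc,
      sub_self]
  have hXG : X * (L₁ᵀ * G) = G := by
    have hLt : X * L₁ᵀ + Nᵀ * L₂ᵀ = 1 := by
      simpa [transpose_add, transpose_mul] using congrArg transpose hL
    calc X * (L₁ᵀ * G) = (X * L₁ᵀ + Nᵀ * L₂ᵀ) * G := by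
          rw [Matrix.add_mul, Matrix.mul_assoc Nᵀ, hL₂G, Matrix.mul_zero, add_zero,
            Matrix.mul_assoc]
      _ = G := by rw [hLt, Matrix.one_mul]
  have hHG : Xᵀ * H⁻¹ * G = 1 := by
    calc Xᵀ * H⁻¹ * G = Xᵀ * L₁ - Xᵀ * L₂ * (K⁻¹ * L₂ᵀ * H * L₁) := by
          simp only [hG_def, Matrix.mul_sub, Matrix.mul_assoc,
            nonsing_inv_mul_cancel_left _ _ hH]
      _ = 1 := by rw [hXL₁, hXL₂, Matrix.zero_mul, sub_zero]
  rw [hRHS]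
  exact inv_eq_right_inv (by rw [Matrix.mul_assoc, hXG, hHG])

end Matrix

theorem stmt_3_general (n p : ℕ) (X : Matrix (Fin n) (Fin p) ℝ)
    (H : Matrix (Fin n) (Fin n) ℝ) (hH : H.PosDef)
    (L₁ : Matrix (Fin n) (Fin p) ℝ) (L₂ : Matrix (Fin n) (Fin (n - p)) ℝ)
    (M : Matrix (Fin p ⊕ Fin (n - p)) (Fin n) ℝ)
    (hLM : Matrix.fromCols L₁ L₂ * M = 1) (hML : M * Matrix.fromCols L₁ L₂ = 1)
    (hL₁X : L₁ᵀ * X = 1) (hL₂X : L₂ᵀ * X = 0) :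
    (Xᵀ * H⁻¹ * X)⁻¹ =
      L₁ᵀ * H * L₁ - L₁ᵀ * H * L₂ * (L₂ᵀ * H * L₂)⁻¹ * L₂ᵀ * H * L₁ := by
  have hXL₁ : Xᵀ * L₁ = 1 := by simpa using congrArg transpose hL₁X
  have hXL₂ : Xᵀ * L₂ = 0 := by simpa using congrArg transpose hL₂X
  have hK : (L₂ᵀ * H * L₂).PosDef := by
    simpa only [conjTranspose_eq_transpose_of_trivial] using hH.conjTranspose_mul_mul_same
      (mulVec_injective_of_mul_eq_one (toRows₂_mul_eq_one_of_mul_fromCols_eq_one hML))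
  exact inv_transpose_mul_inv_mul_eq hH.det_pos.ne'.isUnit hK.det_pos.ne'.isUnit hXL₁ hXL₂
    (mul_add_mul_toRows₂_eq_one hLM hXL₁ hXL₂)

theorem stmt_3 (n p : ℕ) (hpn : p < n) (X : Matrix (Fin n) (Fin p) ℝ)
    (hX : X.rank = p) (H : Matrix (Fin n) (Fin n) ℝ) (hH : H.PosDef)
    (L₁ : Matrix (Fin n) (Fin p) ℝ) (L₂ : Matrix (Fin n) (Fin (n - p)) ℝ)
    (M : Matrix (Fin p ⊕ Fin (n - p)) (Fin n) ℝ)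
    (hLM : Matrix.fromCols L₁ L₂ * M = 1) (hML : M * Matrix.fromCols L₁ L₂ = 1)
    (hL₁X : L₁ᵀ * X = 1) (hL₂X : L₂ᵀ * X = 0) :
    (Xᵀ * H⁻¹ * X)⁻¹ =
      L₁ᵀ * H * L₁ - L₁ᵀ * H * L₂ * (L₂ᵀ * H * L₂)⁻¹ * L₂ᵀ * H * L₁ :=
  stmt_3_general n p X H hH L₁ L₂ M hLM hML hL₁X hL₂X
end

section
/- Let X ∈ ℝ^{n×p} have full column rank p < n, H be symmetric positive definite, and L = [L₁, L₂] be nonsingular with L₁ᵀX = I_p and L₂ᵀX = 0. Then det(LᵀHL) = det(H)·det(LᵀL) and det(H)·det(LᵀL) = det(L₂ᵀHL₂)/det(XᵀH⁻¹X); equivalently log det(LᵀL) + log det(H) = log det(L₂ᵀHL₂) − log det(XᵀH⁻¹X). -/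
/-!
With `K = Lᵀ H L`, one has `K⁻¹ = M H⁻¹ Mᵀ` for the inverse `M` of `L`, and `Lᵀ X = [I; 0]` turns
`Xᵀ H⁻¹ X` into the top-left block of `K⁻¹`. By the Schur complement formula that block is the
inverse of the Schur complement of `L₂ᵀ H L₂` in `K`, so
`det (Xᵀ H⁻¹ X) * det K = det (L₂ᵀ H L₂)`, while `det K = det H * det (Lᵀ L)` since `L` is square.
-/

open Matrix

namespace Matrix

variable {m n k R : Type*} [Fintype m] [CommRing R]

theorem mulVec_injective_of_mul_eq_one_s4 [Fintype n] [DecidableEq m] {L : Matrix n m R}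
    {M : Matrix m n R} (hML : M * L = 1) : Function.Injective L.mulVec := fun x y h => by
  simpa [mulVec_mulVec, hML] using congrArg (M *ᵥ ·) h

theorem mulVec_injective_right_of_fromCols [Fintype k] {L₁ : Matrix n m R} {L₂ : Matrix n k R}
    (h : Function.Injective (fromCols L₁ L₂).mulVec) : Function.Injective L₂.mulVec :=
  fun x y hxy => by
    have := @h (Sum.elim 0 x) (Sum.elim 0 y) (by simp [hxy])
    simpa using congrArg (· ∘ Sum.inr) this

theorem fromCols_one_zero_mul_mul_fromRows_one_zero [Fintype n] [DecidableEq m]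
    (N : Matrix (m ⊕ n) (m ⊕ n) R) :
    fromCols (1 : Matrix m m R) (0 : Matrix m n R) * N *
        fromRows (1 : Matrix m m R) (0 : Matrix n m R) = N.toBlocks₁₁ := by
  rw [← fromBlocks_toBlocks N, fromCols_mul_fromBlocks, fromCols_mul_fromRows]
  simp

variable [Fintype n] [DecidableEq m] [DecidableEq n]

theorem det_transpose_mul_mul_of_mul_eq_one [Nontrivial R] {L : Matrix n m R} {M : Matrix m n R}
    (hLM : L * M = 1) (hML : M * L = 1) (G : Matrix n n R) :
    (Lᵀ * G * L).det = G.det * (Lᵀ * L).det := by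
  let e : n ≃ m := Fintype.equivOfCardEq (square_of_invertible L M hLM hML)
  let Ls := L.submatrix id e
  have key : ∀ G : Matrix n n R, (Lᵀ * G * L).det = G.det * Ls.det ^ 2 := by
    intro G
    rw [← det_submatrix_equiv_self e, ← submatrix_mul_equiv _ _ _ (Equiv.refl n),
      ← submatrix_mul_equiv _ _ _ (Equiv.refl n)]
    simp only [Equiv.coe_refl, submatrix_id_id, ← transpose_submatrix, det_mul, det_transpose]
    ring
  rw [key G, show (Lᵀ * L).det = Ls.det ^ 2 by simpa using key 1]

theorem transpose_mul_mul_mul_mul_inv_mul_transpose_eq_one {L : Matrix n m R} {M : Matrix m n R}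
    (hLM : L * M = 1) (hML : M * L = 1) {H : Matrix n n R} (hH : IsUnit H.det) :
    Lᵀ * H * L * (M * H⁻¹ * Mᵀ) = 1 := by
  calc Lᵀ * H * L * (M * H⁻¹ * Mᵀ) = Lᵀ * (H * (L * M) * H⁻¹) * Mᵀ := by
        simp only [Matrix.mul_assoc]
    _ = (M * L)ᵀ := by rw [hLM, Matrix.mul_one, mul_nonsing_inv _ hH, Matrix.mul_one, transpose_mul]
    _ = 1 := by rw [hML, transpose_one]

/-- Jacobi's complementary minor identity for a `2 × 2` block decomposition. -/
theorem det_toBlocks₁₁_inv_mul_det (K : Matrix (m ⊕ n) (m ⊕ n) R) (hK : IsUnit K.det)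
    (hD : IsUnit K.toBlocks₂₂.det) :
    K⁻¹.toBlocks₁₁.det * K.det = K.toBlocks₂₂.det := by
  obtain ⟨A, B, C, D, rfl⟩ : ∃ A B C D, fromBlocks A B C D = K :=
    ⟨_, _, _, _, fromBlocks_toBlocks K⟩
  rw [toBlocks_fromBlocks₂₂] at hD ⊢
  let := invertibleOfIsUnitDet _ hK
  let := invertibleOfIsUnitDet _ hD
  let := invertibleOfFromBlocks₂₂Invertible A B C D
  rw [← invOf_eq_nonsing_inv, invOf_fromBlocks₂₂_eq, toBlocks_fromBlocks₁₁, det_fromBlocks₂₂,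
    mul_left_comm, ← det_mul, invOf_mul_self, det_one, mul_one]

end Matrix

theorem stmt_4_general (n p : ℕ) (X : Matrix (Fin n) (Fin p) ℝ)
    (H : Matrix (Fin n) (Fin n) ℝ) (hH : H.PosDef)
    (L₁ : Matrix (Fin n) (Fin p) ℝ) (L₂ : Matrix (Fin n) (Fin (n - p)) ℝ)
    (M : Matrix (Fin p ⊕ Fin (n - p)) (Fin n) ℝ)
    (hLM : Matrix.fromCols L₁ L₂ * M = 1) (hML : M * Matrix.fromCols L₁ L₂ = 1)
    (hL₁X : L₁ᵀ * X = 1) (hL₂X : L₂ᵀ * X = 0) :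
    ((Matrix.fromCols L₁ L₂)ᵀ * H * Matrix.fromCols L₁ L₂).det
        = H.det * ((Matrix.fromCols L₁ L₂)ᵀ * Matrix.fromCols L₁ L₂).det ∧
    H.det * ((Matrix.fromCols L₁ L₂)ᵀ * Matrix.fromCols L₁ L₂).det
        = (L₂ᵀ * H * L₂).det / (Xᵀ * H⁻¹ * X).det ∧
    Real.log ((Matrix.fromCols L₁ L₂)ᵀ * Matrix.fromCols L₁ L₂).det
        + Real.log H.det
        = Real.log (L₂ᵀ * H * L₂).det - Real.log (Xᵀ * H⁻¹ * X).det := by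
  set L := fromCols L₁ L₂ with hL
  set K := Lᵀ * H * L with hK
  have hH_det : IsUnit H.det := hH.det_pos.ne'.isUnit
  have hK_mul : K * (M * H⁻¹ * Mᵀ) = 1 :=
    transpose_mul_mul_mul_mul_inv_mul_transpose_eq_one hLM hML hH_det
  have hK_det : K.det = H.det * (Lᵀ * L).det := det_transpose_mul_mul_of_mul_eq_one hLM hML H
  have hK₂₂ : K.toBlocks₂₂ = L₂ᵀ * H * L₂ := by
    rw [hK, hL, transpose_fromCols, fromRows_mul, fromRows_mul_fromCols, toBlocks_fromBlocks₂₂]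
  have hD_pos : 0 < (L₂ᵀ * H * L₂).det :=
    (hH.conjTranspose_mul_mul_same
      (mulVec_injective_right_of_fromCols (mulVec_injective_of_mul_eq_one_s4 hML))).det_pos
  have hE : Xᵀ * H⁻¹ * X = K⁻¹.toBlocks₁₁ := by
    have hLX : Lᵀ * X = fromRows 1 0 := by
      rw [hL, transpose_fromCols, fromRows_mul, hL₁X, hL₂X]
    have hX : X = Mᵀ * (Lᵀ * X) := by
      rw [← Matrix.mul_assoc, ← transpose_mul, hLM, transpose_one, Matrix.one_mul]
    rw [inv_eq_right_inv hK_mul, ← fromCols_one_zero_mul_mul_fromRows_one_zero, hX, hLX,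
      transpose_mul, transpose_fromRows, transpose_one, transpose_zero, transpose_transpose]
    simp only [Matrix.mul_assoc]
  have hJacobi : (Xᵀ * H⁻¹ * X).det * K.det = (L₂ᵀ * H * L₂).det := by
    rw [hE, ← hK₂₂]
    exact det_toBlocks₁₁_inv_mul_det K (isUnit_det_of_right_inverse hK_mul)
      (hK₂₂ ▸ hD_pos.ne'.isUnit)
  have hK_ne : K.det ≠ 0 := (isUnit_det_of_right_inverse hK_mul).ne_zero
  have hE_ne : (Xᵀ * H⁻¹ * X).det ≠ 0 := left_ne_zero_of_mul (hJacobi ▸ hD_pos.ne')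
  have hc₂ : H.det * (Lᵀ * L).det = (L₂ᵀ * H * L₂).det / (Xᵀ * H⁻¹ * X).det := by
    rw [← hK_det, ← hJacobi, mul_div_cancel_left₀ _ hE_ne]
  refine ⟨hK_det, hc₂, ?_⟩
  rw [add_comm, ← Real.log_mul hH_det.ne_zero (right_ne_zero_of_mul (hK_det ▸ hK_ne)), hc₂,
    Real.log_div hD_pos.ne' hE_ne]

theorem stmt_4 (n p : ℕ) (hpn : p < n) (X : Matrix (Fin n) (Fin p) ℝ)
    (hX : X.rank = p) (H : Matrix (Fin n) (Fin n) ℝ) (hH : H.PosDef)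
    (L₁ : Matrix (Fin n) (Fin p) ℝ) (L₂ : Matrix (Fin n) (Fin (n - p)) ℝ)
    (M : Matrix (Fin p ⊕ Fin (n - p)) (Fin n) ℝ)
    (hLM : Matrix.fromCols L₁ L₂ * M = 1) (hML : M * Matrix.fromCols L₁ L₂ = 1)
    (hL₁X : L₁ᵀ * X = 1) (hL₂X : L₂ᵀ * X = 0) :
    ((Matrix.fromCols L₁ L₂)ᵀ * H * Matrix.fromCols L₁ L₂).det
        = H.det * ((Matrix.fromCols L₁ L₂)ᵀ * Matrix.fromCols L₁ L₂).det ∧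
    H.det * ((Matrix.fromCols L₁ L₂)ᵀ * Matrix.fromCols L₁ L₂).det
        = (L₂ᵀ * H * L₂).det / (Xᵀ * H⁻¹ * X).det ∧
    Real.log ((Matrix.fromCols L₁ L₂)ᵀ * Matrix.fromCols L₁ L₂).det
        + Real.log H.det
        = Real.log (L₂ᵀ * H * L₂).det - Real.log (Xᵀ * H⁻¹ * X).det :=
  stmt_4_general n p X H hH L₁ L₂ M hLM hML hL₁X hL₂X
end

section
/- Let H(κ) be a symmetric positive definite matrix depending differentiably on a real parameter κᵢ, X a constant full column rank matrix, and P(κ) = H⁻¹ − H⁻¹X(XᵀH⁻¹X)⁻¹XᵀH⁻¹. Then ∂P/∂κᵢ = −P (∂H/∂κᵢ) P. -/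
/-!
Write `K = H⁻¹` and `S = Xᵀ K X`; full column rank of `X` makes `S` positive definite, hence
invertible. Then `P = (1 - K X S⁻¹ Xᵀ) K = K (1 - X S⁻¹ Xᵀ K)`, and differentiating the factors
with `(A⁻¹)' = -A⁻¹ A' A⁻¹` applied to `S` collapses the product rule to
`P' = (1 - K X S⁻¹ Xᵀ) K' (1 - X S⁻¹ Xᵀ K)`. Substituting `K' = -K H' K` gives `P' = -P H' P`.
-/

open Matrix Topology

variable {m l q : Type*}

def HasEntrywiseDerivAt (A : ℝ → Matrix m l ℝ) (A' : Matrix m l ℝ) (t : ℝ) : Prop :=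
  ∀ i j, HasDerivAt (fun s => A s i j) (A' i j) t

namespace HasEntrywiseDerivAt

variable {A B : ℝ → Matrix m l ℝ} {A' B' : Matrix m l ℝ} {t : ℝ}

lemma const (C : Matrix m l ℝ) (t : ℝ) : HasEntrywiseDerivAt (fun _ => C) 0 t :=
  fun i j => hasDerivAt_const t (C i j)

lemma sub (hA : HasEntrywiseDerivAt A A' t) (hB : HasEntrywiseDerivAt B B' t) :
    HasEntrywiseDerivAt (fun s => A s - B s) (A' - B') t :=
  fun i j => (hA i j).sub (hB i j)

lemma mul [Fintype l] {B : ℝ → Matrix l q ℝ} {B' : Matrix l q ℝ}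
    (hA : HasEntrywiseDerivAt A A' t) (hB : HasEntrywiseDerivAt B B' t) :
    HasEntrywiseDerivAt (fun s => A s * B s) (A' * B t + A t * B') t := by
  intro i j
  have hsum : HasDerivAt (fun s => ∑ k, A s i k * B s k j)
      (∑ k, (A' i k * B t k j + A t i k * B' k j)) t :=
    HasDerivAt.fun_sum fun k _ => (hA i k).mul (hB k j)
  simpa only [mul_apply, Matrix.add_apply, Finset.sum_add_distrib] using hsum

lemma const_mul [Fintype m] {B : ℝ → Matrix m q ℝ} {B' : Matrix m q ℝ}
    (C : Matrix l m ℝ) (hB : HasEntrywiseDerivAt B B' t) :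
    HasEntrywiseDerivAt (fun s => C * B s) (C * B') t := by
  simpa only [Matrix.zero_mul, zero_add] using (const C t).mul hB

lemma mul_const [Fintype l] (hA : HasEntrywiseDerivAt A A' t) (C : Matrix l q ℝ) :
    HasEntrywiseDerivAt (fun s => A s * C) (A' * C) t := by
  simpa only [Matrix.mul_zero, add_zero] using hA.mul (const C t)

end HasEntrywiseDerivAt

section Inverse

variable [Fintype m] [DecidableEq m] {A : ℝ → Matrix m m ℝ} {t : ℝ}

lemma differentiableAt_det (hA : ∀ i j, DifferentiableAt ℝ (fun s => A s i j) t) :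
    DifferentiableAt ℝ (fun s => (A s).det) t := by
  simp only [det_apply']
  exact DifferentiableAt.fun_sum fun σ _ => (DifferentiableAt.fun_finsetProd fun i _ =>
    hA (σ i) i).const_mul _

lemma differentiableAt_adjugate_apply (hA : ∀ i j, DifferentiableAt ℝ (fun s => A s i j) t)
    (i j : m) : DifferentiableAt ℝ (fun s => (A s).adjugate i j) t := by
  simp only [adjugate_apply]
  refine differentiableAt_det fun a b => ?_
  rcases eq_or_ne a j with rfl | hne
  · simpa only [updateRow_self] using differentiableAt_const _
  · simpa only [updateRow_ne hne] using hA a b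

lemma differentiableAt_inv_apply (hA : ∀ i j, DifferentiableAt ℝ (fun s => A s i j) t)
    (hdet : (A t).det ≠ 0) (i j : m) :
    DifferentiableAt ℝ (fun s => (A s)⁻¹ i j) t := by
  simp only [inv_def, Matrix.smul_apply, Ring.inverse_eq_inv, smul_eq_mul]
  exact ((differentiableAt_det hA).inv hdet).mul (differentiableAt_adjugate_apply hA i j)

/-- Differentiating `A * A⁻¹ = 1`, valid near `t` since `det A` is continuous, determines the
derivative of `A⁻¹`, which exists by Cramer's rule. -/
lemma HasEntrywiseDerivAt.inv {A' : Matrix m m ℝ} (hA : HasEntrywiseDerivAt A A' t)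
    (hdet : IsUnit (A t).det) :
    HasEntrywiseDerivAt (fun s => (A s)⁻¹) (-((A t)⁻¹ * A' * (A t)⁻¹)) t := by
  have hdiff i j := (hA i j).differentiableAt
  set B' : Matrix m m ℝ := of fun i j => deriv (fun s => (A s)⁻¹ i j) t
  have hB : HasEntrywiseDerivAt (fun s => (A s)⁻¹) B' t := fun i j =>
    (differentiableAt_inv_apply hdiff hdet.ne_zero i j).hasDerivAt
  have hunit : ∀ᶠ s in 𝓝 t, A s * (A s)⁻¹ = 1 :=
    ((differentiableAt_det hdiff).continuousAt.eventually_ne hdet.ne_zero).mono fun s hs =>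
      mul_nonsing_inv _ (isUnit_iff_ne_zero.mpr hs)
  have hzero : A' * (A t)⁻¹ + A t * B' = 0 := by
    ext i j
    refine (hA.mul hB i j).unique ?_
    refine ((HasEntrywiseDerivAt.const (1 : Matrix m m ℝ) t) i j).congr_of_eventuallyEq ?_
    exact hunit.mono fun s hs => by simp only [hs]
  have hB' : B' = -((A t)⁻¹ * A' * (A t)⁻¹) := by
    calc B' = (A t)⁻¹ * (A t * B') := (nonsing_inv_mul_cancel_left _ _ hdet).symm
      _ = (A t)⁻¹ * -(A' * (A t)⁻¹) := by rw [eq_neg_of_add_eq_zero_right hzero]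
      _ = -((A t)⁻¹ * A' * (A t)⁻¹) := by rw [Matrix.mul_neg, Matrix.mul_assoc]
  exact hB' ▸ hB

end Inverse

lemma Matrix.mulVec_injective_of_rank_eq_card_s8 {K : Type*} [Field K] [Fintype l]
    {X : Matrix m l K} (hX : X.rank = Fintype.card l) : Function.Injective X.mulVec := by
  rw [mulVec_injective_iff, linearIndependent_iff_card_eq_finrank_span, ← hX,
    rank_eq_finrank_span_cols]
  rfl

section ResidualProjector

variable [Fintype m] [Fintype l] [DecidableEq l]

noncomputable def residualProjector (X : Matrix m l ℝ) (K : Matrix m m ℝ) : Matrix m m ℝ :=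
  K - K * X * (Xᵀ * K * X)⁻¹ * Xᵀ * K

variable [DecidableEq m] (X : Matrix m l ℝ)

lemma residualProjector_eq_mul_left (K : Matrix m m ℝ) :
    residualProjector X K = (1 - K * X * (Xᵀ * K * X)⁻¹ * Xᵀ) * K := by
  rw [residualProjector, Matrix.sub_mul, Matrix.one_mul]

lemma residualProjector_eq_mul_right (K : Matrix m m ℝ) :
    residualProjector X K = K * (1 - X * (Xᵀ * K * X)⁻¹ * Xᵀ * K) := by
  simp only [residualProjector, Matrix.mul_sub, Matrix.mul_one, Matrix.mul_assoc]

lemma HasEntrywiseDerivAt.residualProjector {K : ℝ → Matrix m m ℝ} {K' : Matrix m m ℝ} {t : ℝ}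
    (hK : HasEntrywiseDerivAt K K' t) (hS : IsUnit (Xᵀ * K t * X).det) :
    HasEntrywiseDerivAt (fun s => residualProjector X (K s))
      ((1 - K t * X * (Xᵀ * K t * X)⁻¹ * Xᵀ) * K' * (1 - X * (Xᵀ * K t * X)⁻¹ * Xᵀ * K t)) t := by
  have hSinv := ((hK.const_mul Xᵀ).mul_const X).inv hS
  convert hK.sub (((hK.mul_const X).mul hSinv).mul_const Xᵀ |>.mul hK) using 1
  · rfl
  simp only [Matrix.sub_mul, Matrix.mul_sub, Matrix.add_mul, Matrix.one_mul, Matrix.mul_one,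
    Matrix.neg_mul, Matrix.mul_neg, Matrix.mul_assoc]
  abel

end ResidualProjector

theorem stmt_8 (n p : ℕ) (X : Matrix (Fin n) (Fin p) ℝ) (hX : X.rank = p)
    (H : ℝ → Matrix (Fin n) (Fin n) ℝ) (H' : Matrix (Fin n) (Fin n) ℝ) (κ : ℝ)
    (hH : ∀ t, (H t).PosDef)
    (hderiv : ∀ i j, HasDerivAt (fun t => H t i j) (H' i j) κ)
    (P : ℝ → Matrix (Fin n) (Fin n) ℝ)
    (hP : ∀ t, P t = (H t)⁻¹ - (H t)⁻¹ * X * (Xᵀ * (H t)⁻¹ * X)⁻¹ * Xᵀ * (H t)⁻¹) :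
    ∀ i j, HasDerivAt (fun t => P t i j) ((-(P κ * H' * P κ)) i j) κ := by
  have hXinj : Function.Injective X.mulVec :=
    mulVec_injective_of_rank_eq_card_s8 (by rwa [Fintype.card_fin])
  have hSpos : (Xᵀ * (H κ)⁻¹ * X).PosDef := by
    simpa only [conjTranspose_eq_transpose_of_trivial] using
      (hH κ).inv.conjTranspose_mul_mul_same hXinj
  have hPK := (HasEntrywiseDerivAt.inv hderiv (hH κ).det_pos.ne'.isUnit).residualProjector X
    hSpos.det_pos.ne'.isUnit
  have hPκ : P κ = residualProjector X (H κ)⁻¹ := hP κ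
  show HasEntrywiseDerivAt P (-(P κ * H' * P κ)) κ
  convert hPK using 1
  · exact funext hP
  nth_rw 1 [hPκ, residualProjector_eq_mul_left]
  rw [hPκ, residualProjector_eq_mul_right]
  simp only [Matrix.mul_neg, Matrix.neg_mul, Matrix.mul_assoc]
end

section
/- Let R ∈ ℝ^{n×n} and G ∈ ℝ^{b×b} be symmetric positive definite, X ∈ ℝ^{n×p} of full column rank, Z ∈ ℝ^{n×b}. Define C = [[XᵀR⁻¹X, XᵀR⁻¹Z],[ZᵀR⁻¹X, ZᵀR⁻¹Z + G⁻¹]] and H = R + ZGZᵀ. Then the top-left p×p block of C⁻¹ equals (XᵀH⁻¹X)⁻¹. -/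
/-!
If the bottom-right block `D` of a block matrix is invertible, the top-left block of its inverse
is the inverse of the Schur complement `A - B D⁻¹ C`. For the mixed model matrix,
`D = ZᵀR⁻¹Z + G⁻¹` is positive definite, and by the Woodbury identity
`(R + ZGZᵀ)⁻¹ = R⁻¹ - R⁻¹Z D⁻¹ ZᵀR⁻¹`, so that Schur complement is exactly `XᵀH⁻¹X`.
-/

open Matrix

namespace Matrix

variable {m n α : Type*} [Fintype m] [Fintype n] [DecidableEq m] [DecidableEq n] [CommRing α]

-- No invertibility of the Schur complement is needed: when it is singular, so is the block
-- matrix, and both sides are the junk value `0`.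
theorem toBlocks₁₁_inv_fromBlocks_of_isUnit₂₂ {A : Matrix m m α} {B : Matrix m n α}
    {C : Matrix n m α} {D : Matrix n n α} (hD : IsUnit D) :
    (fromBlocks A B C D)⁻¹.toBlocks₁₁ = (A - B * D⁻¹ * C)⁻¹ := by
  obtain ⟨_⟩ := hD.nonempty_invertible
  rw [← invOf_eq_nonsing_inv D]
  by_cases hS : IsUnit (A - B * ⅟D * C)
  · obtain ⟨_⟩ := hS.nonempty_invertible
    let := fromBlocks₂₂Invertible A B C D
    rw [← invOf_eq_nonsing_inv, ← invOf_eq_nonsing_inv, invOf_fromBlocks₂₂_eq,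
      toBlocks_fromBlocks₁₁]
  · have hM : ¬IsUnit (fromBlocks A B C D) := isUnit_fromBlocks_iff_of_invertible₂₂.not.mpr hS
    rw [nonsing_inv_apply_not_isUnit _ (by rwa [← isUnit_iff_isUnit_det]),
      nonsing_inv_apply_not_isUnit _ (by rwa [← isUnit_iff_isUnit_det])]
    rfl

theorem PosDef.transpose_mul_inv_mul_add_inv {R : Matrix m m ℝ} (hR : R.PosDef)
    {G : Matrix n n ℝ} (hG : G.PosDef) (Z : Matrix m n ℝ) : (Zᵀ * R⁻¹ * Z + G⁻¹).PosDef := by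
  have hZRZ := hR.inv.posSemidef.conjTranspose_mul_mul_same Z
  rw [conjTranspose_eq_transpose_of_trivial] at hZRZ
  exact hG.inv.posSemidef_add hZRZ

end Matrix

theorem stmt_15_general (n p b : ℕ) (R : Matrix (Fin n) (Fin n) ℝ) (hR : R.PosDef)
    (G : Matrix (Fin b) (Fin b) ℝ) (hG : G.PosDef)
    (X : Matrix (Fin n) (Fin p) ℝ)
    (Z : Matrix (Fin n) (Fin b) ℝ) :
    ((Matrix.fromBlocks (Xᵀ * R⁻¹ * X) (Xᵀ * R⁻¹ * Z)
        (Zᵀ * R⁻¹ * X) (Zᵀ * R⁻¹ * Z + G⁻¹))⁻¹).toBlocks₁₁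
      = (Xᵀ * (R + Z * G * Zᵀ)⁻¹ * X)⁻¹ := by
  have hD := hR.transpose_mul_inv_mul_add_inv hG Z
  have woodbury := add_mul_mul_inv_eq_sub R Z G Zᵀ hR.isUnit hG.isUnit
    (by rw [add_comm]; exact hD.isUnit)
  rw [toBlocks₁₁_inv_fromBlocks_of_isUnit₂₂ hD.isUnit, woodbury, add_comm G⁻¹]
  simp only [Matrix.mul_sub, Matrix.sub_mul, Matrix.mul_assoc]

theorem stmt_15 (n p b : ℕ) (R : Matrix (Fin n) (Fin n) ℝ) (hR : R.PosDef)
    (G : Matrix (Fin b) (Fin b) ℝ) (hG : G.PosDef)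
    (X : Matrix (Fin n) (Fin p) ℝ) (hX : X.rank = p)
    (Z : Matrix (Fin n) (Fin b) ℝ) :
    ((Matrix.fromBlocks (Xᵀ * R⁻¹ * X) (Xᵀ * R⁻¹ * Z)
        (Zᵀ * R⁻¹ * X) (Zᵀ * R⁻¹ * Z + G⁻¹))⁻¹).toBlocks₁₁
      = (Xᵀ * (R + Z * G * Zᵀ)⁻¹ * X)⁻¹ :=
  stmt_15_general n p b R hR G hG X Z
end

section
/- Let R ∈ ℝ^{n×n} and G ∈ ℝ^{b×b} be symmetric positive definite, X ∈ ℝ^{n×p} of full column rank, Z ∈ ℝ^{n×b}, H = R + ZGZᵀ, W = [X, Z], and C = WᵀR⁻¹W + diag(0, G⁻¹) (i.e., C = [[XᵀR⁻¹X, XᵀR⁻¹Z],[ZᵀR⁻¹X, ZᵀR⁻¹Z + G⁻¹]]). Then H⁻¹ − H⁻¹X(XᵀH⁻¹X)⁻¹XᵀH⁻¹ = R⁻¹ − R⁻¹WC⁻¹WᵀR⁻¹. -/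
/-!
By Woodbury, `H⁻¹ = P := R⁻¹ - R⁻¹ Z K⁻¹ Zᵀ R⁻¹` with `K = Zᵀ R⁻¹ Z + G⁻¹`, the lower right block
of `C`. The Schur complement of `K` in `C` is then `Xᵀ H⁻¹ X`, so the block inverse of `C` gives
`R⁻¹ W C⁻¹ Wᵀ R⁻¹ = H⁻¹ X (Xᵀ H⁻¹ X)⁻¹ Xᵀ H⁻¹ + R⁻¹ Z K⁻¹ Zᵀ R⁻¹`, and subtracting this from
`R⁻¹` leaves the left-hand side. Positive definiteness of `R`, `G` and full column rank of `X`
make `K` and `Xᵀ H⁻¹ X` positive definite, hence invertible.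
-/

open Matrix

namespace Matrix

theorem mulVec_injective_of_rank_eq_card_s16 {K m n : Type*} [Field K] [Fintype m] [Fintype n]
    {X : Matrix m n K} (hX : X.rank = Fintype.card n) : Function.Injective X.mulVec := by
  have h := LinearMap.finrank_range_add_finrank_ker X.mulVecLin
  rw [← rank, hX, Module.finrank_fintype_fun_eq_card] at h
  have hker : Module.finrank K (LinearMap.ker X.mulVecLin) = 0 := by omega
  exact LinearMap.ker_eq_bot.mp (Submodule.finrank_eq_zero.mp hker)

section BlockInverse

variable {α : Type*} [CommRing α] {n p b : Type*} [Fintype n] [Fintype p] [Fintype b]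
  [DecidableEq p] [DecidableEq b]

theorem inv_fromBlocks_of_isUnit₂₂ {A : Matrix p p α} {B : Matrix p b α} {C : Matrix b p α}
    {D : Matrix b b α} (hD : IsUnit D) (hS : IsUnit (A - B * D⁻¹ * C)) :
    (fromBlocks A B C D)⁻¹ =
      fromBlocks (A - B * D⁻¹ * C)⁻¹ (-((A - B * D⁻¹ * C)⁻¹ * B * D⁻¹))
        (-(D⁻¹ * C * (A - B * D⁻¹ * C)⁻¹))
        (D⁻¹ + D⁻¹ * C * (A - B * D⁻¹ * C)⁻¹ * B * D⁻¹) := by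
  have := hD.invertible
  have : Invertible (A - B * ⅟D * C) := by rw [invOf_eq_nonsing_inv]; exact hS.invertible
  have := fromBlocks₂₂Invertible A B C D
  simp only [← invOf_eq_nonsing_inv, invOf_fromBlocks₂₂_eq]

variable {M P : Matrix n n α} {X : Matrix n p α} {Z : Matrix n b α} {D : Matrix b b α}

theorem sub_mul_fromCols_mul_inv_fromBlocks_mul_eq
    (hP : P = M - M * Z * (Zᵀ * M * Z + D)⁻¹ * Zᵀ * M)
    (hK : IsUnit (Zᵀ * M * Z + D)) (hS : IsUnit (Xᵀ * P * X)) :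
    M - M * fromCols X Z *
        (fromBlocks (Xᵀ * M * X) (Xᵀ * M * Z) (Zᵀ * M * X) (Zᵀ * M * Z + D))⁻¹ *
        (fromCols X Z)ᵀ * M
      = P - P * X * (Xᵀ * P * X)⁻¹ * Xᵀ * P := by
  set K := Zᵀ * M * Z + D
  have hSchur : Xᵀ * M * X - Xᵀ * M * Z * K⁻¹ * (Zᵀ * M * X) = Xᵀ * P * X := by
    simp only [hP, Matrix.mul_sub, Matrix.sub_mul, Matrix.mul_assoc]
  rw [inv_fromBlocks_of_isUnit₂₂ hK (hSchur ▸ hS), hSchur, transpose_fromCols,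
    Matrix.mul_fromCols, fromCols_mul_fromBlocks, fromCols_mul_fromRows, hP]
  simp only [Matrix.mul_sub, Matrix.sub_mul, Matrix.mul_add, Matrix.add_mul,
    Matrix.mul_neg, Matrix.neg_mul, Matrix.mul_assoc]
  abel

end BlockInverse

end Matrix

theorem stmt_16 (n p b : ℕ) (R : Matrix (Fin n) (Fin n) ℝ) (hR : R.PosDef)
    (G : Matrix (Fin b) (Fin b) ℝ) (hG : G.PosDef)
    (X : Matrix (Fin n) (Fin p) ℝ) (hX : X.rank = p)
    (Z : Matrix (Fin n) (Fin b) ℝ)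
    (H : Matrix (Fin n) (Fin n) ℝ) (hH : H = R + Z * G * Zᵀ)
    (W : Matrix (Fin n) (Fin p ⊕ Fin b) ℝ) (hW : W = Matrix.fromCols X Z)
    (C : Matrix (Fin p ⊕ Fin b) (Fin p ⊕ Fin b) ℝ)
    (hC : C = Matrix.fromBlocks (Xᵀ * R⁻¹ * X) (Xᵀ * R⁻¹ * Z)
        (Zᵀ * R⁻¹ * X) (Zᵀ * R⁻¹ * Z + G⁻¹)) :
    H⁻¹ - H⁻¹ * X * (Xᵀ * H⁻¹ * X)⁻¹ * Xᵀ * H⁻¹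
      = R⁻¹ - R⁻¹ * W * C⁻¹ * Wᵀ * R⁻¹ := by
  have hK : (Zᵀ * R⁻¹ * Z + G⁻¹).PosDef := by
    refine PosDef.posSemidef_add ?_ hG.inv
    simpa [conjTranspose_eq_transpose_of_trivial] using
      hR.inv.posSemidef.conjTranspose_mul_mul_same Z
  have hHpd : H.PosDef := by
    refine hH ▸ hR.add_posSemidef ?_
    simpa [conjTranspose_eq_transpose_of_trivial] using
      hG.posSemidef.mul_mul_conjTranspose_same Z
  have hWoodbury : H⁻¹ = R⁻¹ - R⁻¹ * Z * (Zᵀ * R⁻¹ * Z + G⁻¹)⁻¹ * Zᵀ * R⁻¹ := by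
    rw [hH, add_mul_mul_inv_eq_sub R Z G Zᵀ hR.isUnit hG.isUnit (add_comm (Zᵀ * R⁻¹ * Z) G⁻¹ ▸ hK.isUnit),
      add_comm G⁻¹]
  have hS : (Xᵀ * H⁻¹ * X).PosDef := by
    simpa [conjTranspose_eq_transpose_of_trivial] using
      hHpd.inv.conjTranspose_mul_mul_same (mulVec_injective_of_rank_eq_card_s16 (by simpa using hX))
  rw [hW, hC, sub_mul_fromCols_mul_inv_fromBlocks_mul_eq hWoodbury hK.isUnit hS.isUnit]
end
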